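/- arXiv:1802.01419 — 2 statements merged into one kernel-verified Lean document; each statement's English description precedes it below -/
import Mathlib

section
/- Let O and P be finite posets on disjoint ground sets X and Y, and let R ∈ R(O,P). Then the collection of downsets of the generalized vertical sum O ⊕_R P is exactly the disjoint union over all downsets D of P of the families {D ∪ RD ∪ E : E a downset of O − RD}, where RD = {x ∈ X : (x,y) ∈ R for some y ∈ D}. Consequently, d(O ⊕_R P) = Σ_{D downset of P} d(O − RD). -/
open scoped Classical

variable {α : Type*} [DecidableEq α]

/-- `q` is a partial order relation with ground set `S`: it is a set of pairs
contained in `S × S`, reflexive on `S`, transitive and antisymmetric. -/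
def IsPOon (S : Finset α) (q : Finset (α × α)) : Prop :=
  q ⊆ S ×ˢ S ∧ (∀ x ∈ S, (x, x) ∈ q) ∧
  (∀ x y z : α, (x, y) ∈ q → (y, z) ∈ q → (x, z) ∈ q) ∧
  (∀ x y : α, (x, y) ∈ q → (y, x) ∈ q → x = y)

/-- The relation induced on a subset `A` of the ground set. -/
def restrictRel (q : Finset (α × α)) (A : Finset α) : Finset (α × α) :=
  q.filter fun r => r.1 ∈ A ∧ r.2 ∈ A

/-- The downsets of the poset `(S, q)`. -/
noncomputable def downsets (S : Finset α) (q : Finset (α × α)) : Finset (Finset α) :=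
  S.powerset.filter fun D => ∀ y ∈ D, ∀ x : α, (x, y) ∈ q → x ∈ D

/-- `d(P)`, the number of downsets of the poset `(S, q)`. -/
noncomputable def dnum (S : Finset α) (q : Finset (α × α)) : ℕ :=
  (downsets S q).card

/-- The upsets of the poset `(S, q)`. -/
noncomputable def upsets (S : Finset α) (q : Finset (α × α)) : Finset (Finset α) :=
  S.powerset.filter fun U => ∀ x ∈ U, ∀ y : α, (x, y) ∈ q → y ∈ U

/-- Down-closure `QA = {x : x ≤_Q a for some a ∈ A}`. -/
def dcl (q : Finset (α × α)) (A : Finset α) : Finset α :=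
  (q.filter fun r => r.2 ∈ A).image Prod.fst

/-- Up-closure `AQ = {y : a ≤_Q y for some a ∈ A}`. -/
def ucl (q : Finset (α × α)) (A : Finset α) : Finset α :=
  (q.filter fun r => r.1 ∈ A).image Prod.snd

/-- The set of minimal elements of the poset `(S, q)`. -/
noncomputable def minset (S : Finset α) (q : Finset (α × α)) : Finset α :=
  S.filter fun x => ∀ y : α, (y, x) ∈ q → y = x

/-- `E(M, P)`: the partial orders on `M ∪ K` inducing `p` on `K` whose set of
minimal elements is exactly `M`. -/
noncomputable def extPOs (M K : Finset α) (p : Finset (α × α)) :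
    Finset (Finset (α × α)) :=
  ((M ∪ K) ×ˢ (M ∪ K)).powerset.filter fun q =>
    IsPOon (M ∪ K) q ∧ restrictRel q K = p ∧ minset (M ∪ K) q = M

/-- `A` is an antichain of the poset `(S, q)`. -/
def isAntichain (S : Finset α) (q : Finset (α × α)) (A : Finset α) : Prop :=
  A ⊆ S ∧ ∀ x ∈ A, ∀ y ∈ A, (x, y) ∈ q → x = y

/-- The posets `(S, q)` and `(T, r)` are order-isomorphic. -/
def POIso {β : Type*} (S : Finset α) (q : Finset (α × α))
    (T : Finset β) (r : Finset (β × β)) : Prop :=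
  ∃ f : α → β, Set.BijOn f ↑S ↑T ∧ ∀ x ∈ S, ∀ y ∈ S, ((x, y) ∈ q ↔ (f x, f y) ∈ r)

/-- `C` is a chain of the poset `(S, q)`. -/
def isChainOn (S : Finset α) (q : Finset (α × α)) (C : Finset α) : Prop :=
  C ⊆ S ∧ ∀ x ∈ C, ∀ y ∈ C, (x, y) ∈ q ∨ (y, x) ∈ q

/-- The height of the poset `(S, q)`: the maximal size of a chain. -/
noncomputable def heightP (S : Finset α) (q : Finset (α × α)) : ℕ :=
  (S.powerset.filter (isChainOn S q)).sup Finset.card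


lemma mem_downsets_iff (S : Finset α) (q : Finset (α × α)) (F : Finset α) :
    F ∈ downsets S q ↔ F ⊆ S ∧ ∀ y ∈ F, ∀ x : α, (x, y) ∈ q → x ∈ F := by
  simp [downsets, Finset.mem_filter, Finset.mem_powerset]

lemma mem_dcl_iff (q : Finset (α × α)) (A : Finset α) (x : α) :
    x ∈ dcl q A ↔ ∃ y, (x, y) ∈ q ∧ y ∈ A := by
  simp only [dcl, Finset.mem_image, Finset.mem_filter, Prod.exists]
  constructor
  · rintro ⟨a, b, ⟨h1, h2⟩, rfl⟩; exact ⟨b, h1, h2⟩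
  · rintro ⟨y, h1, h2⟩; exact ⟨x, y, ⟨h1, h2⟩, rfl⟩

/-- Theorem 3.3: the downsets of a generalized vertical sum `O ⊕_R P` form the
disjoint union, over the downsets `D` of `P`, of the families
`{D ∪ RD ∪ E : E downset of O − RD}`; hence
`d(O ⊕_R P) = Σ_{D downset of P} d(O − RD)`. -/
theorem stmt_4 (X Y : Finset α) (hXY : Disjoint X Y)
    (o p R : Finset (α × α)) (ho : IsPOon X o) (hp : IsPOon Y p)
    (hR : R ⊆ X ×ˢ Y)
    (hOR : ∀ x x' y : α, (x', x) ∈ o → (x, y) ∈ R → (x', y) ∈ R)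
    (hRP : ∀ x y y' : α, (x, y) ∈ R → (y, y') ∈ p → (x, y') ∈ R) :
    downsets (X ∪ Y) (o ∪ R ∪ p) =
      (downsets Y p).biUnion (fun D =>
        (downsets (X \ dcl R D) (restrictRel o (X \ dcl R D))).image
          (fun E => D ∪ dcl R D ∪ E)) ∧
    ((downsets Y p : Set (Finset α)).PairwiseDisjoint (fun D =>
        (downsets (X \ dcl R D) (restrictRel o (X \ dcl R D))).image
          (fun E => D ∪ dcl R D ∪ E))) ∧
    dnum (X ∪ Y) (o ∪ R ∪ p) =
      ∑ D ∈ downsets Y p, dnum (X \ dcl R D) (restrictRel o (X \ dcl R D)) := by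
  classical
  have hXnotY : ∀ a ∈ X, a ∉ Y := fun a ha => Finset.disjoint_left.1 hXY ha
  have hdclX : ∀ D : Finset α, dcl R D ⊆ X := by
    intro D x hx
    rw [mem_dcl_iff] at hx
    obtain ⟨y, hxy, _⟩ := hx
    exact (Finset.mem_product.1 (hR hxy)).1
  -- forward direction
  have key1 : ∀ F ∈ downsets (X ∪ Y) (o ∪ R ∪ p),
      (F ∩ Y) ∈ downsets Y p ∧
      ((F ∩ X) \ dcl R (F ∩ Y)) ∈ downsets (X \ dcl R (F ∩ Y))
        (restrictRel o (X \ dcl R (F ∩ Y))) ∧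
      F = (F ∩ Y) ∪ dcl R (F ∩ Y) ∪ ((F ∩ X) \ dcl R (F ∩ Y)) := by
    intro F hF
    rw [mem_downsets_iff] at hF
    obtain ⟨hFsub, hFdown⟩ := hF
    have hD : (F ∩ Y) ∈ downsets Y p := by
      rw [mem_downsets_iff]
      refine ⟨Finset.inter_subset_right, fun y hy x hxy => ?_⟩
      rw [Finset.mem_inter] at hy ⊢
      have hxX : x ∈ Y := (Finset.mem_product.1 (hp.1 hxy)).1
      exact ⟨hFdown y hy.1 x (by simp [hxy]), hxX⟩
    have hdclF : dcl R (F ∩ Y) ⊆ F := by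
      intro x hx
      rw [mem_dcl_iff] at hx
      obtain ⟨y, hxy, hyD⟩ := hx
      exact hFdown y (Finset.mem_inter.1 hyD).1 x (by simp [hxy])
    have hE : ((F ∩ X) \ dcl R (F ∩ Y)) ∈ downsets (X \ dcl R (F ∩ Y))
        (restrictRel o (X \ dcl R (F ∩ Y))) := by
      rw [mem_downsets_iff]
      constructor
      · intro a ha
        rw [Finset.mem_sdiff] at ha ⊢
        exact ⟨(Finset.mem_inter.1 ha.1).2, ha.2⟩
      · intro y hy x hxy
        rw [restrictRel, Finset.mem_filter] at hxy
        obtain ⟨hxyo, hx1, _⟩ := hxy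
        rw [Finset.mem_sdiff] at hy ⊢
        rw [Finset.mem_sdiff] at hx1
        refine ⟨Finset.mem_inter.2 ⟨?_, hx1.1⟩, hx1.2⟩
        exact hFdown y (Finset.mem_inter.1 hy.1).1 x (by simp [hxyo])
    refine ⟨hD, hE, ?_⟩
    apply Finset.Subset.antisymm
    · intro f hf
      rcases Finset.mem_union.1 (hFsub hf) with hfX | hfY
      · by_cases hfd : f ∈ dcl R (F ∩ Y)
        · exact Finset.mem_union.2 (Or.inl (Finset.mem_union.2 (Or.inr hfd)))
        · exact Finset.mem_union.2 (Or.inr (Finset.mem_sdiff.2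
            ⟨Finset.mem_inter.2 ⟨hf, hfX⟩, hfd⟩))
      · exact Finset.mem_union.2 (Or.inl (Finset.mem_union.2 (Or.inl
          (Finset.mem_inter.2 ⟨hf, hfY⟩))))
    · intro f hf
      rcases Finset.mem_union.1 hf with h | h
      · rcases Finset.mem_union.1 h with h | h
        · exact (Finset.mem_inter.1 h).1
        · exact hdclF h
      · exact (Finset.mem_inter.1 (Finset.mem_sdiff.1 h).1).1
  -- backward direction
  have key2 : ∀ D ∈ downsets Y p,
      ∀ E ∈ downsets (X \ dcl R D) (restrictRel o (X \ dcl R D)),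
      (D ∪ dcl R D ∪ E) ∈ downsets (X ∪ Y) (o ∪ R ∪ p) := by
    intro D hD E hE
    rw [mem_downsets_iff] at hD hE ⊢
    obtain ⟨hDsub, hDdown⟩ := hD
    obtain ⟨hEsub, hEdown⟩ := hE
    have hEX : E ⊆ X := fun a ha => (Finset.mem_sdiff.1 (hEsub ha)).1
    constructor
    · intro a ha
      rcases Finset.mem_union.1 ha with h | h
      · rcases Finset.mem_union.1 h with h | h
        · exact Finset.mem_union.2 (Or.inr (hDsub h))
        · exact Finset.mem_union.2 (Or.inl (hdclX D h))
      · exact Finset.mem_union.2 (Or.inl (hEX h))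
    · intro f hf x hxf
      have hfmem : f ∈ D ∨ f ∈ dcl R D ∨ f ∈ E := by
        rcases Finset.mem_union.1 hf with h | h
        · rcases Finset.mem_union.1 h with h | h
          · exact Or.inl h
          · exact Or.inr (Or.inl h)
        · exact Or.inr (Or.inr h)
      rcases Finset.mem_union.1 hxf with hxf' | hxfp
      · rcases Finset.mem_union.1 hxf' with hxfo | hxfR
        · have hfX : f ∈ X := (Finset.mem_product.1 (ho.1 hxfo)).2
          have hxX : x ∈ X := (Finset.mem_product.1 (ho.1 hxfo)).1
          rcases hfmem with h | h | h
          · exact absurd (hDsub h) (hXnotY f hfX)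
          · rw [mem_dcl_iff] at h
            obtain ⟨y, hfy, hyD⟩ := h
            have : x ∈ dcl R D := (mem_dcl_iff R D x).2 ⟨y, hOR f x y hxfo hfy, hyD⟩
            exact Finset.mem_union.2 (Or.inl (Finset.mem_union.2 (Or.inr this)))
          · by_cases hxd : x ∈ dcl R D
            · exact Finset.mem_union.2 (Or.inl (Finset.mem_union.2 (Or.inr hxd)))
            · have hx' : x ∈ E := by
                apply hEdown f h x
                rw [restrictRel, Finset.mem_filter]
                exact ⟨hxfo, Finset.mem_sdiff.2 ⟨hxX, hxd⟩, hEsub h⟩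
              exact Finset.mem_union.2 (Or.inr hx')
        · have hfY : f ∈ Y := (Finset.mem_product.1 (hR hxfR)).2
          have hfD : f ∈ D := by
            rcases hfmem with h | h | h
            · exact h
            · exact absurd hfY (hXnotY f (hdclX D h))
            · exact absurd hfY (hXnotY f (hEX h))
          have : x ∈ dcl R D := (mem_dcl_iff R D x).2 ⟨f, hxfR, hfD⟩
          exact Finset.mem_union.2 (Or.inl (Finset.mem_union.2 (Or.inr this)))
      · have hfY : f ∈ Y := (Finset.mem_product.1 (hp.1 hxfp)).2
        have hfD : f ∈ D := by
          rcases hfmem with h | h | h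
          · exact h
          · exact absurd hfY (hXnotY f (hdclX D h))
          · exact absurd hfY (hXnotY f (hEX h))
        exact Finset.mem_union.2 (Or.inl (Finset.mem_union.2 (Or.inl
          (hDdown f hfD x hxfp))))
  -- recovering D from the union
  have keyY : ∀ D ∈ downsets Y p,
      ∀ E ∈ downsets (X \ dcl R D) (restrictRel o (X \ dcl R D)),
      (D ∪ dcl R D ∪ E) ∩ Y = D := by
    intro D hD E hE
    rw [mem_downsets_iff] at hD hE
    have hEX : E ⊆ X := fun a ha => (Finset.mem_sdiff.1 (hE.1 ha)).1
    apply Finset.Subset.antisymm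
    · intro a ha
      rw [Finset.mem_inter] at ha
      obtain ⟨ha1, haY⟩ := ha
      rcases Finset.mem_union.1 ha1 with h | h
      · rcases Finset.mem_union.1 h with h | h
        · exact h
        · exact absurd haY (hXnotY a (hdclX D h))
      · exact absurd haY (hXnotY a (hEX h))
    · intro a ha
      exact Finset.mem_inter.2 ⟨Finset.mem_union.2 (Or.inl (Finset.mem_union.2
        (Or.inl ha))), hD.1 ha⟩
  -- recovering E from the union
  have keyE : ∀ D ∈ downsets Y p,
      ∀ E ∈ downsets (X \ dcl R D) (restrictRel o (X \ dcl R D)),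
      (D ∪ dcl R D ∪ E) \ (D ∪ dcl R D) = E := by
    intro D hD E hE
    rw [mem_downsets_iff] at hD hE
    have hEXd : E ⊆ X \ dcl R D := hE.1
    ext a
    rw [Finset.mem_sdiff, Finset.mem_union]
    constructor
    · rintro ⟨h1 | h2, h3⟩
      · exact absurd h1 h3
      · exact h2
    · intro ha
      have haX : a ∈ X \ dcl R D := hEXd ha
      rw [Finset.mem_sdiff] at haX
      refine ⟨Or.inr ha, ?_⟩
      rw [Finset.mem_union]
      rintro (h | h)
      · exact hXnotY a haX.1 (hD.1 h)
      · exact haX.2 h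
  -- part 1
  have hEq : downsets (X ∪ Y) (o ∪ R ∪ p) =
      (downsets Y p).biUnion (fun D =>
        (downsets (X \ dcl R D) (restrictRel o (X \ dcl R D))).image
          (fun E => D ∪ dcl R D ∪ E)) := by
    ext F
    rw [Finset.mem_biUnion]
    constructor
    · intro hF
      obtain ⟨hD, hE, hFeq⟩ := key1 F hF
      exact ⟨F ∩ Y, hD, Finset.mem_image.2 ⟨_, hE, hFeq.symm⟩⟩
    · rintro ⟨D, hD, hF⟩
      obtain ⟨E, hE, rfl⟩ := Finset.mem_image.1 hF
      exact key2 D hD E hE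
  -- part 2
  have hPD : ((downsets Y p : Set (Finset α)).PairwiseDisjoint (fun D =>
      (downsets (X \ dcl R D) (restrictRel o (X \ dcl R D))).image
        (fun E => D ∪ dcl R D ∪ E))) := by
    intro D1 hD1 D2 hD2 hne
    simp only [Finset.mem_coe] at hD1 hD2
    rw [Function.onFun, Finset.disjoint_left]
    intro F hF1 hF2
    obtain ⟨E1, hE1, h1⟩ := Finset.mem_image.1 hF1
    obtain ⟨E2, hE2, h2⟩ := Finset.mem_image.1 hF2
    apply hne
    have k1 := keyY D1 hD1 E1 hE1
    have k2 := keyY D2 hD2 E2 hE2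
    rw [h1] at k1
    rw [h2] at k2
    rw [← k1, ← k2]
  refine ⟨hEq, hPD, ?_⟩
  rw [dnum, hEq, Finset.card_biUnion]
  · apply Finset.sum_congr rfl
    intro D hD
    rw [dnum, Finset.card_image_of_injOn]
    intro E1 hE1 E2 hE2 h12
    simp only [Finset.mem_coe] at hE1 hE2
    have k1 := keyE D hD E1 hE1
    have k2 := keyE D hD E2 hE2
    rw [← k1, ← k2]
    exact congrArg (fun s => s \ (D ∪ dcl R D)) h12
  · intro D1 hD1 D2 hD2 hne
    exact hPD hD1 hD2 hne
end

section
/- Let P be a finite poset with k points of which exactly m are minimal (1 ≤ m ≤ k). Then d(P) ≤ 2^{m−1} + 2^{k−1}, and equality holds if and only if P is isomorphic to A_{m−1} + (A_1 ⊕ A_{k−m}), the disjoint sum of an (m−1)-element antichain with the poset obtained by placing one element below a (k−m)-element antichain. -/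
/-!
Let `M` be the set of minimal points and `T = S \ M`. Sort the downsets `D` by `A = D ∩ M`: such
a `D` contains no point above `M \ A`, so there are at most `2 ^ x_A` of them, where `x_A` counts
the points of `T` not above `M \ A`. Every point of `T` lies above some point of `A` or of
`M \ A`, so `x_A + x_{M \ A} ≤ #T`, and the fibres of `A` and `M \ A` together hold at most
`2 ^ x_A + 2 ^ x_{M \ A} ≤ 1 + 2 ^ (x_A + x_{M \ A}) ≤ 1 + 2 ^ #T` downsets. Summing over all
`2 ^ m` subsets `A` counts every downset twice, whence `2 d(P) ≤ 2 ^ m + 2 ^ k`.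

In the case of equality every such pair is tight. For `A = M` this says that `M ∪ B` is a downset
for every `B ⊆ T`, so nothing but minimal points lies below a point of `T`; for `A = {a}` it says
that either no point of `T` lies above `a` or none lies above `M \ {a}`, so a single minimal point
lies below all of `T`.
-/

open scoped Classical

variable {α : Type*} [DecidableEq α]

open Finset

section Basic

omit [DecidableEq α]

variable {S : Finset α} {q : Finset (α × α)}

@[simp]
lemma mem_downsets {D : Finset α} :
    D ∈ downsets S q ↔ D ⊆ S ∧ ∀ y ∈ D, ∀ x, (x, y) ∈ q → x ∈ D := by
  simp [downsets]

@[simp]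
lemma mem_minset {x : α} : x ∈ minset S q ↔ x ∈ S ∧ ∀ y, (y, x) ∈ q → y = x := by
  simp [minset]

lemma minset_subset : minset S q ⊆ S := filter_subset _ _

lemma IsPOon.mem_of_mem (hq : IsPOon S q) {x y : α} (h : (x, y) ∈ q) : x ∈ S ∧ y ∈ S :=
  mem_product.1 (hq.1 h)

lemma IsPOon.exists_minset_le (hq : IsPOon S q) {x : α} (hx : x ∈ S) :
    ∃ a ∈ minset S q, (a, x) ∈ q := by
  let below : α → Finset α := fun y => S.filter fun z => (z, y) ∈ q
  -- A point below `x` with the fewest points below it is minimal.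
  obtain ⟨a, hax, hmin⟩ := exists_min_image (below x) (fun y => #(below y))
    ⟨x, mem_filter.2 ⟨hx, hq.2.1 x hx⟩⟩
  obtain ⟨haS, hax⟩ := mem_filter.1 hax
  refine ⟨a, mem_minset.2 ⟨haS, fun z hza => ?_⟩, hax⟩
  by_contra hne
  have hzS := (hq.mem_of_mem hza).1
  have hlt : #(below z) < #(below a) := by
    refine card_lt_card ⟨fun y hy => ?_, fun hsub => hne ?_⟩
    · exact mem_filter.2 ⟨(mem_filter.1 hy).1, hq.2.2.1 _ _ _ (mem_filter.1 hy).2 hza⟩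
    · exact hq.2.2.2 _ _ hza (mem_filter.1 (hsub (mem_filter.2 ⟨haS, hq.2.1 a haS⟩))).2
  exact hlt.not_ge (hmin z (mem_filter.2 ⟨hzS, hq.2.2.1 _ _ _ hza hax⟩))

end Basic

section Closure

variable {q : Finset (α × α)}

@[simp]
lemma mem_ucl {A : Finset α} {y : α} : y ∈ ucl q A ↔ ∃ a ∈ A, (a, y) ∈ q := by
  simp [ucl, and_comm]

@[simp]
lemma ucl_empty : ucl q ∅ = ∅ := by
  ext; simp

end Closure

lemma two_pow_add_two_pow_le (a b : ℕ) : 2 ^ a + 2 ^ b ≤ 1 + 2 ^ (a + b) := by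
  have ha : 1 ≤ 2 ^ a := Nat.one_le_two_pow
  have hb : 1 ≤ 2 ^ b := Nat.one_le_two_pow
  rw [pow_add]
  nlinarith

lemma eq_zero_or_eq_zero_of_two_pow_add_two_pow_eq {a b : ℕ}
    (h : 2 ^ a + 2 ^ b = 1 + 2 ^ (a + b)) : a = 0 ∨ b = 0 := by
  by_contra! hab
  have ha : 2 ≤ 2 ^ a := Nat.le_self_pow hab.1 2
  have hb : 2 ≤ 2 ^ b := Nat.le_self_pow hab.2 2
  rw [pow_add] at h
  nlinarith

lemma Finset.sum_powerset_sdiff {β : Type*} [AddCommMonoid β] (s : Finset α)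
    (f : Finset α → β) : ∑ A ∈ s.powerset, f (s \ A) = ∑ A ∈ s.powerset, f A :=
  sum_nbij' (s \ ·) (s \ ·) (by simp) (by simp)
    (fun _ hA => sdiff_sdiff_eq_self (mem_powerset.1 hA))
    (fun _ hA => sdiff_sdiff_eq_self (mem_powerset.1 hA)) fun _ _ => rfl

section Fibers

variable {S : Finset α} {q : Finset (α × α)}

noncomputable def downsetsWithMinimals (S : Finset α) (q : Finset (α × α)) (A : Finset α) :
    Finset (Finset α) :=
  (downsets S q).filter fun D => D ∩ minset S q = A

lemma dnum_eq_sum_card_downsetsWithMinimals :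
    dnum S q = ∑ A ∈ (minset S q).powerset, #(downsetsWithMinimals S q A) :=
  card_eq_sum_card_fiberwise fun _ _ => mem_powerset.2 inter_subset_right

lemma sdiff_minset_injOn (A : Finset α) :
    Set.InjOn (· \ minset S q) (downsetsWithMinimals S q A) := by
  intro D₁ h₁ D₂ h₂ h
  obtain ⟨-, hD₁⟩ := mem_filter.1 h₁
  obtain ⟨-, hD₂⟩ := mem_filter.1 h₂
  rw [← sdiff_union_inter D₁ (minset S q), ← sdiff_union_inter D₂ (minset S q), hD₁, hD₂]
  exact congrArg (· ∪ A) h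

lemma sdiff_minset_subset {A D : Finset α} (hD : D ∈ downsetsWithMinimals S q A) :
    D \ minset S q ⊆ (S \ minset S q) \ ucl q (minset S q \ A) := by
  obtain ⟨⟨hDS, hdown⟩, hDA⟩ := mem_filter.1 hD |>.imp_left mem_downsets.1
  intro y hy
  obtain ⟨hyD, hyM⟩ := mem_sdiff.1 hy
  refine mem_sdiff.2 ⟨mem_sdiff.2 ⟨hDS hyD, hyM⟩, fun hyA => ?_⟩
  obtain ⟨a, ha, hay⟩ := mem_ucl.1 hyA
  obtain ⟨haM, haA⟩ := mem_sdiff.1 ha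
  exact haA (hDA ▸ mem_inter.2 ⟨hdown y hyD a hay, haM⟩)

lemma card_downsetsWithMinimals_le (A : Finset α) :
    #(downsetsWithMinimals S q A) ≤ 2 ^ #((S \ minset S q) \ ucl q (minset S q \ A)) := by
  rw [← card_powerset]
  exact card_le_card_of_injOn _ (fun D hD => mem_powerset.2 (sdiff_minset_subset hD))
    (sdiff_minset_injOn A)

lemma union_mem_downsets_of_card_downsetsWithMinimals_eq {A B : Finset α}
    (h : #(downsetsWithMinimals S q A) = 2 ^ #((S \ minset S q) \ ucl q (minset S q \ A)))
    (hB : B ⊆ (S \ minset S q) \ ucl q (minset S q \ A)) : A ∪ B ∈ downsets S q := by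
  have himage : (downsetsWithMinimals S q A).image (· \ minset S q) =
      ((S \ minset S q) \ ucl q (minset S q \ A)).powerset := by
    refine eq_of_subset_of_card_le ?_ ?_
    · exact image_subset_iff.2 fun D hD => mem_powerset.2 (sdiff_minset_subset hD)
    · rw [card_image_of_injOn (sdiff_minset_injOn A), h, card_powerset]
  obtain ⟨D, hD, rfl⟩ := mem_image.1 (himage ▸ mem_powerset.2 hB)
  obtain ⟨hD, hDA⟩ := mem_filter.1 hD
  rwa [← hDA, union_comm, sdiff_union_inter]

end Fibers

section Pairs

variable {S : Finset α} {q : Finset (α × α)}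

lemma IsPOon.card_sdiff_ucl_add_card_sdiff_ucl_le (hq : IsPOon S q) (A : Finset α) :
    #((S \ minset S q) \ ucl q (minset S q \ A)) + #((S \ minset S q) \ ucl q A) ≤
      #(S \ minset S q) := by
  -- Every point of `S \ minset S q` lies above a point of `A` or of `minset S q \ A`.
  have hdisj : Disjoint ((S \ minset S q) \ ucl q (minset S q \ A))
      ((S \ minset S q) \ ucl q A) := by
    refine disjoint_left.2 fun x hx hx' => ?_
    obtain ⟨a, ha, hax⟩ := hq.exists_minset_le (mem_sdiff.1 (mem_sdiff.1 hx).1).1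
    by_cases haA : a ∈ A
    · exact (mem_sdiff.1 hx').2 (mem_ucl.2 ⟨a, haA, hax⟩)
    · exact (mem_sdiff.1 hx).2 (mem_ucl.2 ⟨a, mem_sdiff.2 ⟨ha, haA⟩, hax⟩)
  rw [← card_union_of_disjoint hdisj]
  exact card_le_card (union_subset sdiff_subset sdiff_subset)

lemma IsPOon.card_add_card_compl_le (hq : IsPOon S q) {A : Finset α} (hA : A ⊆ minset S q) :
    #(downsetsWithMinimals S q A) + #(downsetsWithMinimals S q (minset S q \ A)) ≤
      1 + 2 ^ #(S \ minset S q) := by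
  have hcompl := card_downsetsWithMinimals_le (S := S) (q := q) (minset S q \ A)
  rw [Finset.sdiff_sdiff_eq_self hA] at hcompl
  calc _ ≤ 2 ^ #((S \ minset S q) \ ucl q (minset S q \ A)) +
        2 ^ #((S \ minset S q) \ ucl q A) := add_le_add (card_downsetsWithMinimals_le A) hcompl
    _ ≤ 1 + 2 ^ (#((S \ minset S q) \ ucl q (minset S q \ A)) +
        #((S \ minset S q) \ ucl q A)) := two_pow_add_two_pow_le _ _
    _ ≤ 1 + 2 ^ #(S \ minset S q) := by
      gcongr
      · norm_num
      · exact hq.card_sdiff_ucl_add_card_sdiff_ucl_le A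

lemma IsPOon.card_eq_and_disjoint_of_card_add_card_compl_eq (hq : IsPOon S q) {A : Finset α}
    (hA : A ⊆ minset S q)
    (h : #(downsetsWithMinimals S q A) + #(downsetsWithMinimals S q (minset S q \ A)) =
      1 + 2 ^ #(S \ minset S q)) :
    #(downsetsWithMinimals S q A) = 2 ^ #((S \ minset S q) \ ucl q (minset S q \ A)) ∧
      (Disjoint (S \ minset S q) (ucl q A) ∨ Disjoint (S \ minset S q) (ucl q (minset S q \ A))) := by
  have hx := card_downsetsWithMinimals_le (S := S) (q := q) A
  have hy := card_downsetsWithMinimals_le (S := S) (q := q) (minset S q \ A)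
  rw [Finset.sdiff_sdiff_eq_self hA] at hy
  have hxy := hq.card_sdiff_ucl_add_card_sdiff_ucl_le A
  set T := S \ minset S q
  set x := #(T \ ucl q (minset S q \ A))
  set y := #(T \ ucl q A)
  have hpow := two_pow_add_two_pow_le x y
  have hmono : 2 ^ (x + y) ≤ 2 ^ #T := Nat.pow_le_pow_right (by norm_num) hxy
  have hpow_eq : 2 ^ x + 2 ^ y = 1 + 2 ^ (x + y) := by omega
  have hxy_eq : x + y = #T := Nat.pow_right_injective le_rfl (show 2 ^ (x + y) = 2 ^ #T by omega)
  refine ⟨by omega, ?_⟩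
  rcases eq_zero_or_eq_zero_of_two_pow_add_two_pow_eq hpow_eq with hx0 | hy0
  · left
    exact sdiff_eq_self_iff_disjoint.1 (eq_of_subset_of_card_le sdiff_subset (by omega))
  · right
    exact sdiff_eq_self_iff_disjoint.1 (eq_of_subset_of_card_le sdiff_subset (by omega))

end Pairs

section Sum

variable {S : Finset α} {q : Finset (α × α)}

lemma two_mul_dnum_eq_sum :
    2 * dnum S q = ∑ A ∈ (minset S q).powerset,
      (#(downsetsWithMinimals S q A) + #(downsetsWithMinimals S q (minset S q \ A))) := by
  rw [sum_add_distrib, sum_powerset_sdiff (minset S q) (fun A => #(downsetsWithMinimals S q A)),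
    ← dnum_eq_sum_card_downsetsWithMinimals, two_mul]

lemma sum_powerset_minset_one_add_two_pow (hM : (minset S q).Nonempty) :
    ∑ _A ∈ (minset S q).powerset, (1 + 2 ^ #(S \ minset S q)) =
      2 * (2 ^ (#(minset S q) - 1) + 2 ^ (#S - 1)) := by
  obtain ⟨c, hc⟩ := Nat.exists_eq_add_of_le (card_le_card (minset_subset (S := S) (q := q)))
  obtain ⟨a, ha⟩ := Nat.exists_eq_succ_of_ne_zero (card_pos.2 hM).ne'
  rw [sum_const, card_powerset, smul_eq_mul, card_sdiff_of_subset minset_subset, hc, ha,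
    Nat.add_sub_cancel_left, Nat.succ_sub_one, Nat.succ_add_sub_one, pow_succ, pow_add]
  ring

lemma IsPOon.dnum_le (hq : IsPOon S q) (hM : (minset S q).Nonempty) :
    dnum S q ≤ 2 ^ (#(minset S q) - 1) + 2 ^ (#S - 1) := by
  have h : 2 * dnum S q ≤ 2 * (2 ^ (#(minset S q) - 1) + 2 ^ (#S - 1)) := by
    rw [two_mul_dnum_eq_sum, ← sum_powerset_minset_one_add_two_pow hM]
    exact sum_le_sum fun A hA => hq.card_add_card_compl_le (mem_powerset.1 hA)
  omega

lemma IsPOon.card_add_card_compl_eq_of_dnum_eq (hq : IsPOon S q) (hM : (minset S q).Nonempty)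
    (h : dnum S q = 2 ^ (#(minset S q) - 1) + 2 ^ (#S - 1)) {A : Finset α}
    (hA : A ⊆ minset S q) :
    #(downsetsWithMinimals S q A) + #(downsetsWithMinimals S q (minset S q \ A)) =
      1 + 2 ^ #(S \ minset S q) := by
  have hsum : 2 * dnum S q = ∑ _A ∈ (minset S q).powerset, (1 + 2 ^ #(S \ minset S q)) := by
    rw [sum_powerset_minset_one_add_two_pow hM, h]
  rw [two_mul_dnum_eq_sum] at hsum
  exact (sum_eq_sum_iff_of_le fun B hB => hq.card_add_card_compl_le (mem_powerset.1 hB)).1 hsum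
    A (mem_powerset.2 hA)

end Sum

section Extremal

variable {S : Finset α} {q : Finset (α × α)}

lemma mem_minset_or_eq_of_card_downsetsWithMinimals_minset_eq
    (hfull : #(downsetsWithMinimals S q (minset S q)) = 2 ^ #(S \ minset S q))
    {x t : α} (hxt : (x, t) ∈ q) (ht : t ∈ S \ minset S q) : x ∈ minset S q ∨ x = t := by
  have hdown := union_mem_downsets_of_card_downsetsWithMinimals_eq (B := {t})
    (by rwa [Finset.sdiff_self, ucl_empty, sdiff_empty])
    (by rwa [Finset.sdiff_self, ucl_empty, sdiff_empty, singleton_subset_iff])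
  exact (mem_union.1 ((mem_downsets.1 hdown).2 t (by simp) x hxt)).imp_right mem_singleton.1

lemma IsPOon.exists_minset_le_iff_eq (hq : IsPOon S q) (hM : (minset S q).Nonempty)
    (hsplit : ∀ a ∈ minset S q, Disjoint (S \ minset S q) (ucl q {a}) ∨
      Disjoint (S \ minset S q) (ucl q (minset S q \ {a}))) :
    ∃ b ∈ minset S q, ∀ a ∈ minset S q, ∀ t ∈ S \ minset S q, (a, t) ∈ q ↔ a = b := by
  rcases (S \ minset S q).eq_empty_or_nonempty with hT | ⟨t₀, ht₀⟩
  · obtain ⟨b, hb⟩ := hM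
    exact ⟨b, hb, by simp [hT]⟩
  obtain ⟨b, hb, hbt₀⟩ := hq.exists_minset_le (mem_sdiff.1 ht₀).1
  have huniq : ∀ a ∈ minset S q, ∀ t ∈ S \ minset S q, (a, t) ∈ q → a = b := by
    intro a ha t ht hat
    by_contra hab
    rcases hsplit a ha with h | h
    · exact disjoint_left.1 h ht (mem_ucl.2 ⟨a, mem_singleton_self a, hat⟩)
    · exact disjoint_left.1 h ht₀ (mem_ucl.2 ⟨b, by simp [hb, Ne.symm hab], hbt₀⟩)
  refine ⟨b, hb, fun a ha t ht => ⟨huniq a ha t ht, ?_⟩⟩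
  rintro rfl
  obtain ⟨a', ha', ha't⟩ := hq.exists_minset_le (mem_sdiff.1 ht).1
  rwa [← huniq a' ha' t ht ha't]

/-- For `b ∈ M ⊆ S`, the order of `A_{#M - 1} + (A_1 ⊕ A_{#(S \ M)})`, with `b` as the `A_1`. -/
def starRel (S M : Finset α) (b : α) : Finset (α × α) :=
  S.image (fun x => (x, x)) ∪ {b} ×ˢ (S \ M)

@[simp]
lemma mem_starRel {M : Finset α} {b x y : α} :
    (x, y) ∈ starRel S M b ↔ x ∈ S ∧ x = y ∨ x = b ∧ y ∈ S \ M := by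
  simp only [starRel, mem_union, mem_image, Prod.mk.injEq, mem_product, mem_singleton]
  grind

lemma IsPOon.eq_starRel_of_dnum_eq (hq : IsPOon S q) (hM : (minset S q).Nonempty)
    (h : dnum S q = 2 ^ (#(minset S q) - 1) + 2 ^ (#S - 1)) :
    ∃ b ∈ minset S q, q = starRel S (minset S q) b := by
  have hpair := fun A (hA : A ⊆ minset S q) => hq.card_eq_and_disjoint_of_card_add_card_compl_eq
    hA (hq.card_add_card_compl_eq_of_dnum_eq hM h hA)
  obtain ⟨b, hb, hbot⟩ := hq.exists_minset_le_iff_eq hM fun a ha =>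
    (hpair {a} (singleton_subset_iff.2 ha)).2
  have hfull := (hpair _ subset_rfl).1
  rw [Finset.sdiff_self, ucl_empty, sdiff_empty] at hfull
  refine ⟨b, hb, ?_⟩
  ext ⟨x, y⟩
  rw [mem_starRel]
  constructor
  · intro hxy
    obtain ⟨hx, hy⟩ := hq.mem_of_mem hxy
    by_cases hyM : y ∈ minset S q
    · exact Or.inl ⟨hx, (mem_minset.1 hyM).2 x hxy⟩
    have hyT : y ∈ S \ minset S q := mem_sdiff.2 ⟨hy, hyM⟩
    rcases mem_minset_or_eq_of_card_downsetsWithMinimals_minset_eq hfull hxy hyT with hxM | rfl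
    · exact Or.inr ⟨(hbot x hxM y hyT).1 hxy, hyT⟩
    · exact Or.inl ⟨hx, rfl⟩
  · rintro (⟨hx, rfl⟩ | ⟨rfl, hyT⟩)
    · exact hq.2.1 x hx
    · exact (hbot x hb y hyT).2 rfl

end Extremal

section Model

variable {S M : Finset α} {b : α}

lemma starRel_subset (hb : b ∈ S) : starRel S M b ⊆ S ×ˢ S := by
  rintro ⟨x, y⟩ h
  rcases mem_starRel.1 h with ⟨hx, rfl⟩ | ⟨rfl, hy⟩
  · exact mem_product.2 ⟨hx, hx⟩
  · exact mem_product.2 ⟨hb, (mem_sdiff.1 hy).1⟩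

lemma powerset_filter_notMem (s : Finset α) (a : α) :
    s.powerset.filter (a ∉ ·) = (s.erase a).powerset := by
  ext D
  simp [subset_erase]

lemma card_powerset_filter_mem {s : Finset α} {a : α} (ha : a ∈ s) :
    #(s.powerset.filter (a ∈ ·)) = 2 ^ (#s - 1) := by
  have h := card_filter_add_card_filter_not (s := s.powerset) (p := (a ∈ ·))
  rw [powerset_filter_notMem, card_powerset, card_powerset, card_erase_of_mem ha] at h
  obtain ⟨n, hn⟩ := Nat.exists_eq_succ_of_ne_zero (card_pos.2 ⟨a, ha⟩).ne'
  rw [hn, Nat.succ_sub_one, pow_succ] at h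
  rw [hn, Nat.succ_sub_one]
  omega

lemma downsets_starRel (hMS : M ⊆ S) :
    downsets S (starRel S M b) = S.powerset.filter (b ∈ ·) ∪ (M.erase b).powerset := by
  ext D
  simp only [mem_downsets, mem_starRel, mem_union, mem_filter, mem_powerset, subset_erase]
  constructor
  · rintro ⟨hDS, hdown⟩
    by_cases hbD : b ∈ D
    · exact Or.inl ⟨hDS, hbD⟩
    · refine Or.inr ⟨fun y hy => ?_, hbD⟩
      by_contra hyM
      exact hbD (hdown y hy b (Or.inr ⟨rfl, mem_sdiff.2 ⟨hDS hy, hyM⟩⟩))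
  · rintro (⟨hDS, hbD⟩ | ⟨hDM, -⟩)
    · refine ⟨hDS, fun y hy x hxy => ?_⟩
      rcases hxy with ⟨-, rfl⟩ | ⟨rfl, -⟩
      exacts [hy, hbD]
    · refine ⟨hDM.trans hMS, fun y hy x hxy => ?_⟩
      rcases hxy with ⟨-, rfl⟩ | ⟨-, hyT⟩
      exacts [hy, ((mem_sdiff.1 hyT).2 (hDM hy)).elim]

lemma dnum_starRel (hMS : M ⊆ S) (hb : b ∈ M) :
    dnum S (starRel S M b) = 2 ^ (#M - 1) + 2 ^ (#S - 1) := by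
  rw [dnum, downsets_starRel hMS, card_union_of_disjoint, card_powerset_filter_mem (hMS hb),
    card_powerset, card_erase_of_mem hb, add_comm]
  exact disjoint_left.2 fun D hD hD' => notMem_erase b M (mem_powerset.1 hD' (mem_filter.1 hD).2)

end Model

section Iso

omit [DecidableEq α] in
lemma POIso.dnum_eq {β : Type*} {S : Finset α} {q : Finset (α × α)} {T : Finset β}
    {r : Finset (β × β)} (h : POIso S q T r) (hq : q ⊆ S ×ˢ S) (hr : r ⊆ T ×ˢ T) :
    dnum S q = dnum T r := by
  obtain ⟨f, hf, hrel⟩ := h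
  refine card_nbij' (·.image f) (fun E => S.filter (f · ∈ E)) ?_ ?_ ?_ ?_
  · intro D hD
    obtain ⟨hDS, hdown⟩ := mem_downsets.1 hD
    refine mem_downsets.2 ⟨fun y hy => ?_, fun y hy x hxy => ?_⟩
    · obtain ⟨x, hx, rfl⟩ := mem_image.1 hy
      exact hf.mapsTo (hDS hx)
    · obtain ⟨y, hyD, rfl⟩ := mem_image.1 hy
      obtain ⟨x, hxS, rfl⟩ := hf.surjOn (mem_product.1 (hr hxy)).1
      exact mem_image_of_mem f (hdown y hyD x ((hrel x hxS y (hDS hyD)).2 hxy))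
  · intro E hE
    obtain ⟨-, hdown⟩ := mem_downsets.1 hE
    refine mem_downsets.2 ⟨filter_subset _ _, fun y hy x hxy => ?_⟩
    obtain ⟨hyS, hyE⟩ := mem_filter.1 hy
    have hxS := (mem_product.1 (hq hxy)).1
    exact mem_filter.2 ⟨hxS, hdown _ hyE _ ((hrel x hxS y hyS).1 hxy)⟩
  · intro D hD
    have hDS := (mem_downsets.1 hD).1
    ext x
    simp only [mem_filter, mem_image]
    constructor
    · rintro ⟨hxS, y, hyD, hyx⟩
      rwa [← hf.injOn (hDS hyD) hxS hyx]
    · exact fun hx => ⟨hDS hx, x, hx, rfl⟩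
  · intro E hE
    have hET := (mem_downsets.1 hE).1
    ext y
    simp only [mem_filter, mem_image]
    constructor
    · rintro ⟨x, ⟨-, hx⟩, rfl⟩
      exact hx
    · intro hy
      obtain ⟨x, hxS, rfl⟩ := hf.surjOn (hET hy)
      exact ⟨x, ⟨hxS, hy⟩, rfl⟩

lemma poIso_starRel {β : Type*} [DecidableEq β] {S M : Finset α} {T N : Finset β} {b : α}
    {f : α → β} (hS : Set.BijOn f S T) (hM : Set.BijOn f M N) (hMS : M ⊆ S) (hb : b ∈ S) :
    POIso S (starRel S M b) T (starRel T N (f b)) := by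
  have hmem : ∀ y ∈ S, f y ∈ N ↔ y ∈ M := fun y hy =>
    ⟨fun h => by
      obtain ⟨z, hz, hzy⟩ := hM.surjOn h
      rwa [← hS.injOn (hMS hz) hy hzy], fun h => hM.mapsTo h⟩
  refine ⟨f, hS, fun x hx y hy => ?_⟩
  simp only [mem_starRel, mem_sdiff, hS.injOn.eq_iff hx hy, hS.injOn.eq_iff hx hb, hmem y hy,
    hx, hy, mem_coe.1 (hS.mapsTo hx), mem_coe.1 (hS.mapsTo hy)]

lemma exists_bijOn_range {S M : Finset α} {b : α} (hMS : M ⊆ S) (hb : b ∈ M) :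
    ∃ f : α → ℕ, Set.BijOn f S (range #S) ∧ Set.BijOn f M (range #M) ∧ f b = #M - 1 := by
  have hrange : range #M ⊆ range #S := range_subset_range.2 (card_le_card hMS)
  obtain ⟨f₁, hf₁⟩ := (M : Set α).toFinite.exists_bijOn_of_encard_eq
    (t := (range #M : Set ℕ)) (by simp only [Set.encard_coe_eq_coe_finsetCard, card_range])
  obtain ⟨f₂, hf₂⟩ := ((S \ M : Finset α) : Set α).toFinite.exists_bijOn_of_encard_eq
    (t := ((range #S \ range #M : Finset ℕ) : Set ℕ))
    (by simp only [Set.encard_coe_eq_coe_finsetCard, card_sdiff_of_subset hMS,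
      card_sdiff_of_subset hrange, card_range])
  let f₀ := M.piecewise f₁ f₂
  have h₀M : Set.BijOn f₀ M (range #M) :=
    hf₁.congr fun x hx => (piecewise_eq_of_mem _ _ _ hx).symm
  have h₀T : Set.BijOn f₀ ↑(S \ M) ↑(range #S \ range #M) :=
    hf₂.congr fun x hx => (piecewise_eq_of_notMem _ _ _ (mem_sdiff.1 hx).2).symm
  have h₀S : Set.BijOn f₀ S (range #S) := by
    have hinj : Set.InjOn f₀ (↑M ∪ ↑(S \ M)) := by
      refine (Set.injOn_union (disjoint_coe.2 disjoint_sdiff)).2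
        ⟨h₀M.injOn, h₀T.injOn, fun x hx y hy hxy => ?_⟩
      exact (mem_sdiff.1 (h₀T.mapsTo hy)).2 (hxy ▸ h₀M.mapsTo hx)
    have := h₀M.union h₀T hinj
    rwa [← coe_union, ← coe_union, union_sdiff_of_subset hMS, union_sdiff_of_subset hrange]
      at this
  have hlt : f₀ b < #M := mem_range.1 (h₀M.mapsTo hb)
  have hle := card_le_card hMS
  refine ⟨Equiv.swap (f₀ b) (#M - 1) ∘ f₀, ?_, ?_, by simp⟩
  · refine (Equiv.swap_bijOn_self (iff_of_true ?_ ?_)).comp h₀S <;>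
      simp only [coe_range, Set.mem_Iio] <;> omega
  · refine (Equiv.swap_bijOn_self (iff_of_true ?_ ?_)).comp h₀M <;>
      simp only [coe_range, Set.mem_Iio] <;> omega

end Iso

theorem stmt_5_general (S : Finset α) (q : Finset (α × α)) (hq : IsPOon S q)
    (k m : ℕ) (hk : S.card = k) (hm : (minset S q).card = m)
    (hm1 : 1 ≤ m) :
    dnum S q ≤ 2 ^ (m - 1) + 2 ^ (k - 1) ∧
    (dnum S q = 2 ^ (m - 1) + 2 ^ (k - 1) ↔
      POIso S q (Finset.range k)
        (((Finset.range k).image fun i => (i, i)) ∪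
          (({m - 1} : Finset ℕ) ×ˢ (Finset.range k \ Finset.range m)))) := by
  subst hk hm
  have hM : (minset S q).Nonempty := card_pos.1 hm1
  -- The model relation is `starRel (range k) (range m) (m - 1)` by definition.
  refine ⟨hq.dnum_le hM, fun heq => ?_, fun hiso => ?_⟩
  · obtain ⟨b, hb, hqb⟩ := hq.eq_starRel_of_dnum_eq hM heq
    obtain ⟨f, hfS, hfM, hfb⟩ := exists_bijOn_range minset_subset hb
    have := poIso_starRel hfS hfM minset_subset (minset_subset hb)
    rwa [← hqb, hfb] at this
  · have hbM : #(minset S q) - 1 ∈ range #(minset S q) := mem_range.2 (by omega)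
    have hMS := range_subset_range.2 (card_le_card (minset_subset (S := S) (q := q)))
    rw [hiso.dnum_eq hq.1 (starRel_subset (hMS hbM))]
    exact (dnum_starRel hMS hbM).trans (by rw [card_range, card_range])

/-- Corollary 3.5: a poset with `k` points of which exactly `m` (`1 ≤ m ≤ k`) are
minimal has at most `2^{m−1} + 2^{k−1}` downsets, with equality iff it is
isomorphic to `A_{m−1} + (A_1 ⊕ A_{k−m})`. -/
theorem stmt_5 (S : Finset α) (q : Finset (α × α)) (hq : IsPOon S q)
    (k m : ℕ) (hk : S.card = k) (hm : (minset S q).card = m)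
    (hm1 : 1 ≤ m) (hmk : m ≤ k) :
    dnum S q ≤ 2 ^ (m - 1) + 2 ^ (k - 1) ∧
    (dnum S q = 2 ^ (m - 1) + 2 ^ (k - 1) ↔
      POIso S q (Finset.range k)
        (((Finset.range k).image fun i => (i, i)) ∪
          (({m - 1} : Finset ℕ) ×ˢ (Finset.range k \ Finset.range m)))) :=
  stmt_5_general S q hq k m hk hm hm1
end
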